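/- Let m ≥ 1 and let a, b : (Fin m → ZMod 2) → ZMod 2 be bent. Define f : (Fin m → ZMod 2) × ZMod 2 → ZMod 4 by f(x, y) = 2·(a x).val·(1 + (y.val : ZMod 4)) + 2·(b x).val·(y.val : ZMod 4) + (y.val : ZMod 4), all arithmetic in ZMod 4 after casting the 0/1 values. Then f is a bent function in m+1 variables: for every u : Fin m → ZMod 2 and v : ZMod 2, Complex.normSq (∑_{x,y} Complex.I ^ (f (x,y)).val * (-1)^((∑ j, u j * x j) + v*y).val) = 2^(m+1). -/
import Mathlib


/-- The (real-valued) Fourier transform of a binary Boolean function. -/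
def fourier2 {m : ℕ} (g : (Fin m → ZMod 2) → ZMod 2) (u : Fin m → ZMod 2) : ℝ :=
  ∑ x : Fin m → ZMod 2, (-1 : ℝ) ^ ((g x).val + (∑ j, u j * x j).val)

/-- The Fourier transform of a `ZMod 4`-valued function of `m + 1` binary variables,
the last variable being a single `ZMod 2` coordinate. -/
noncomputable def fourier4' {m : ℕ} (f : (Fin m → ZMod 2) × ZMod 2 → ZMod 4)
    (u : Fin m → ZMod 2) (v : ZMod 2) : ℂ :=
  ∑ p : (Fin m → ZMod 2) × ZMod 2,
    Complex.I ^ (f p).val * (-1 : ℂ) ^ ((∑ j, u j * p.1 j) + v * p.2).val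

lemma zmod2_cases : ∀ α : ZMod 2, α = 0 ∨ α = 1 := by decide

lemma sign_add (s v : ZMod 2) : ((-1:ℂ))^(s+v).val = (-1:ℂ)^s.val * (-1:ℂ)^v.val := by
  rcases zmod2_cases s with rfl|rfl <;> rcases zmod2_cases v with rfl|rfl <;>
    simp only [show ((0:ZMod 2)+0).val = 0 from by decide,
      show ((0:ZMod 2)+1).val = 1 from by decide,
      show ((1:ZMod 2)+0).val = 1 from by decide,
      show ((1:ZMod 2)+1).val = 0 from by decide,
      show (0:ZMod 2).val = 0 from rfl, show (1:ZMod 2).val = 1 from rfl] <;> norm_num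

lemma Ipow0 (α : ZMod 2) : Complex.I ^ (2 * ((α.val : ZMod 4))).val = (-1:ℂ) ^ α.val := by
  rcases zmod2_cases α with rfl|rfl
  · rw [show (2 * (((0:ZMod 2).val : ℕ) : ZMod 4)).val = 0 from by decide,
      show (0:ZMod 2).val = 0 from rfl]; norm_num
  · rw [show (2 * (((1:ZMod 2).val : ℕ) : ZMod 4)).val = 2 from by decide,
      show (1:ZMod 2).val = 1 from rfl, Complex.I_sq, pow_one]

lemma Ipow1 (β : ZMod 2) :
    Complex.I ^ (2 * ((β.val : ZMod 4)) + 1).val = Complex.I * (-1:ℂ) ^ β.val := by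
  rcases zmod2_cases β with rfl|rfl
  · rw [show (2 * (((0:ZMod 2).val : ℕ) : ZMod 4) + 1).val = 1 from by decide,
      show (0:ZMod 2).val = 0 from rfl, pow_one, pow_zero, mul_one]
  · rw [show (2 * (((1:ZMod 2).val : ℕ) : ZMod 4) + 1).val = 3 from by decide,
      show (1:ZMod 2).val = 1 from rfl,
      show (3:ℕ) = 2 + 1 from rfl, pow_succ, Complex.I_sq, pow_one]
    ring

/-- If `a, b` are binary bent functions in `m` variables, then
`f(x,y) = 2a(x)(1+y) + 2b(x)y + y` is a `ZMod 4`-valued bent function in `m+1` variables. -/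
theorem stmt7 (m : ℕ) (hm : 1 ≤ m) (a b : (Fin m → ZMod 2) → ZMod 2)
    (ha : ∀ u, (fourier2 a u) ^ 2 = 2 ^ m) (hb : ∀ u, (fourier2 b u) ^ 2 = 2 ^ m)
    (f : (Fin m → ZMod 2) × ZMod 2 → ZMod 4)
    (hf : ∀ p : (Fin m → ZMod 2) × ZMod 2,
      f p = 2 * ((a p.1).val : ZMod 4) * (1 + ((p.2).val : ZMod 4)) +
        2 * ((b p.1).val : ZMod 4) * ((p.2).val : ZMod 4) + ((p.2).val : ZMod 4)) :
    ∀ (u : Fin m → ZMod 2) (v : ZMod 2),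
      Complex.normSq (fourier4' f u v) = 2 ^ (m + 1) := by
  intro u v
  have v0 : (((0:ZMod 2).val : ℕ) : ZMod 4) = 0 := by decide
  have v1 : (((1:ZMod 2).val : ℕ) : ZMod 4) = 1 := by decide
  have hf' : ∀ (x : Fin m → ZMod 2) (y : ZMod 2), f (x,y) =
      2 * ((a x).val : ZMod 4) * (1 + ((y.val : ℕ) : ZMod 4)) +
        2 * ((b x).val : ZMod 4) * ((y.val : ℕ) : ZMod 4) + ((y.val : ℕ) : ZMod 4) :=
    fun x y => hf (x,y)
  have hf0 : ∀ x, f (x, 0) = 2 * ((a x).val : ZMod 4) := by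
    intro x; rw [hf' x 0, v0]; ring
  have hf1 : ∀ x, f (x, 1) = 2 * ((b x).val : ZMod 4) + 1 := by
    intro x; rw [hf' x 1, v1]
    rcases zmod2_cases (a x) with h|h <;> rw [h]
    · rw [show (((0:ZMod 2).val : ℕ) : ZMod 4) = 0 from by decide]; ring
    · rw [show (((1:ZMod 2).val : ℕ) : ZMod 4) = 1 from by decide,
        show ((2:ZMod 4) * 1 * (1 + 1)) = 0 from by decide]; ring
  have key : fourier4' f u v =
      (fourier2 a u : ℂ) + ((-1:ℝ)^v.val * fourier2 b u : ℝ) * Complex.I := by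
    rw [fourier4', Fintype.sum_prod_type]
    have step : ∀ x : Fin m → ZMod 2,
        (∑ y : ZMod 2, Complex.I ^ (f (x, y)).val *
          (-1 : ℂ) ^ ((∑ j, u j * x j) + v * y).val) =
        (-1:ℂ)^(a x).val * (-1:ℂ)^(∑ j, u j * x j).val +
        (Complex.I * (-1:ℂ)^(b x).val) * ((-1:ℂ)^(∑ j, u j * x j).val * (-1:ℂ)^v.val) := by
      intro x
      rw [show (∑ y : ZMod 2, Complex.I ^ (f (x, y)).val *
          (-1 : ℂ) ^ ((∑ j, u j * x j) + v * y).val) =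
          Complex.I ^ (f (x, 0)).val * (-1 : ℂ) ^ ((∑ j, u j * x j) + v * 0).val +
          Complex.I ^ (f (x, 1)).val * (-1 : ℂ) ^ ((∑ j, u j * x j) + v * 1).val from
          Fin.sum_univ_two _]
      rw [hf0, hf1, Ipow0, Ipow1, mul_zero, mul_one, add_zero, sign_add]
    rw [Finset.sum_congr rfl (fun x _ => step x), Finset.sum_add_distrib]
    unfold fourier2
    push_cast
    congr 1
    · exact Finset.sum_congr rfl fun x _ => by rw [pow_add]
    · rw [Finset.mul_sum, Finset.sum_mul]
      refine Finset.sum_congr rfl fun x _ => ?_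
      rw [pow_add]; ring
  rw [key, Complex.normSq_add_mul_I]
  have h2 : ((-1:ℝ)^v.val * fourier2 b u) ^ 2 = fourier2 b u ^ 2 := by
    rw [mul_pow, ← pow_mul, mul_comm v.val 2, pow_mul]; norm_num
  rw [h2, ha, hb, pow_succ]; ring
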